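/- Let E ⊆ ℝ^{n+1}, let 𝔻 = ⋃_{k∈ℤ} 𝔻_k be a dyadic grid on E, and fix Q⁰ which is either E or a cube of 𝔻. Let μ be a nonnegative dyadically doubling Borel measure on Q⁰ with 0 < μ(Q) < ∞ for every Q ∈ 𝔻_{Q⁰}, let ν be a nonnegative Borel measure on Q⁰ with 0 < ν(Q) < ∞ for every Q ∈ 𝔻_{Q⁰}, and let ℱ = {Q_i} ⊆ 𝔻_{Q⁰} be a family of pairwise disjoint cubes. If ν ∈ A∞^{dyadic}(Q⁰, μ), then 𝒫^μ_ℱ ν ∈ A∞^{dyadic}(Q⁰, μ). -/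

import Mathlib

open Metric MeasureTheory
open scoped ENNReal

/-- A dyadic grid on a set `E ⊆ ℝ^{n+1}`: a countable collection
`𝔻 = ⋃_{k ∈ ℤ} 𝔻_k` of Borel subsets of `E` ("cubes") such that
(i) each generation `𝔻_k` is a pairwise disjoint cover of `E`;
(ii) cubes of finer generations are contained in, or disjoint from, cubes of
coarser generations; (iii) every cube has a unique ancestor in each coarser
generation. -/
structure DyadicGrid {n : ℕ} (E : Set (EuclideanSpace ℝ (Fin (n + 1)))) where
  cubes : ℤ → Set (Set (EuclideanSpace ℝ (Fin (n + 1))))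
  countable : (⋃ k : ℤ, cubes k).Countable
  borel : ∀ k : ℤ, ∀ Q ∈ cubes k, MeasurableSet Q
  cover : ∀ k : ℤ, ⋃₀ cubes k = E
  pairwiseDisjoint : ∀ k : ℤ, (cubes k).PairwiseDisjoint id
  nested : ∀ ⦃k j : ℤ⦄, j ≤ k → ∀ Q ∈ cubes k, ∀ Q' ∈ cubes j, Q ⊆ Q' ∨ Q ∩ Q' = ∅
  parent : ∀ ⦃k j : ℤ⦄, j < k → ∀ Q ∈ cubes k, ∃! Q', Q' ∈ cubes j ∧ Q ⊆ Q'

/-- `Q0` is either `E` itself, in which case `DQ0` consists of all the cubes of the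
grid, or `Q0` is a cube of the grid, in which case `DQ0` consists of the cubes
contained in `Q0` of generation at least that of `Q0`. -/
def IsLocalizedFamily {n : ℕ} {E : Set (EuclideanSpace ℝ (Fin (n + 1)))}
    (D : DyadicGrid E) (Q0 : Set (EuclideanSpace ℝ (Fin (n + 1))))
    (DQ0 : Set (Set (EuclideanSpace ℝ (Fin (n + 1))))) : Prop :=
  (Q0 = E ∧ DQ0 = ⋃ k : ℤ, D.cubes k) ∨
  (∃ k0 : ℤ, Q0 ∈ D.cubes k0 ∧
    DQ0 = {Q | ∃ k : ℤ, k0 ≤ k ∧ Q ∈ D.cubes k ∧ Q ⊆ Q0})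

/-- A set function `ρ` (e.g. a measure, or a projected measure) is *dyadically
doubling* on the cubes of `DQ0`: there is `C ≥ 1` such that `ρ(Q) ≤ C ρ(Q')`
whenever `Q, Q' ∈ DQ0` with `Q' ⊆ Q` and `ℓ(Q) = 2ℓ(Q')` (i.e. `Q` is of some
generation `k` and `Q'` of generation `k+1`). -/
def DyadicallyDoubling {n : ℕ} {E : Set (EuclideanSpace ℝ (Fin (n + 1)))}
    (D : DyadicGrid E) (DQ0 : Set (Set (EuclideanSpace ℝ (Fin (n + 1)))))
    (ρ : Set (EuclideanSpace ℝ (Fin (n + 1))) → ℝ≥0∞) : Prop :=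
  ∃ C : ℝ, 1 ≤ C ∧ ∀ k : ℤ, ∀ Q ∈ D.cubes k, ∀ Q' ∈ D.cubes (k + 1),
    Q ∈ DQ0 → Q' ∈ DQ0 → Q' ⊆ Q → ρ Q ≤ ENNReal.ofReal C * ρ Q'

/-- A set function `ρ` belongs to `A∞^{dyadic}(Q⁰, μ)` if there exist
`0 < α, β < 1` such that for every `Q ∈ 𝔻_{Q⁰}` and every Borel `F ⊆ Q`,
`μ(F)/μ(Q) > α` implies `ρ(F)/ρ(Q) > β`. -/
def AInftyDyadic {n : ℕ}
    (DQ0 : Set (Set (EuclideanSpace ℝ (Fin (n + 1)))))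
    (μ : Measure (EuclideanSpace ℝ (Fin (n + 1))))
    (ρ : Set (EuclideanSpace ℝ (Fin (n + 1))) → ℝ≥0∞) : Prop :=
  ∃ a b : ℝ, 0 < a ∧ a < 1 ∧ 0 < b ∧ b < 1 ∧
    ∀ Q ∈ DQ0, ∀ F ⊆ Q, MeasurableSet F →
      ENNReal.ofReal a < μ F / μ Q → ENNReal.ofReal b < ρ F / ρ Q

/-- The projection `𝒫^μ_ℱ ν` of `ν` with respect to a pairwise disjoint family of
cubes `ℱ`: `𝒫^μ_ℱ ν(A) = ν(A \ ⋃ᵢ Qᵢ) + ∑ᵢ (μ(A ∩ Qᵢ)/μ(Qᵢ)) ν(Qᵢ)`. -/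
noncomputable def dyadicProjection {n : ℕ}
    (μ ν : Measure (EuclideanSpace ℝ (Fin (n + 1))))
    (F : Set (Set (EuclideanSpace ℝ (Fin (n + 1)))))
    (A : Set (EuclideanSpace ℝ (Fin (n + 1)))) : ℝ≥0∞ :=
  ν (A \ ⋃₀ F) + ∑' Qi : F, (μ (A ∩ Qi.1) / μ Qi.1) * ν Qi.1

/-!
If `Q` lies in a cube `s` of `ℱ`, the projection is a multiple of `μ` on `s`, so its ratios on
`Q` are those of `μ`. Otherwise every cube of `ℱ` lies in `Q` or misses it, and then
`𝒫ν(Q) ≤ ν(Q)`. For `G ⊆ Q` with `μ(G) > (α + c) μ(Q)`, where `c = (1 - α)/2`, let `E` be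
`G \ ⋃ℱ` together with the cubes of `ℱ` in which `G` has `μ`-density above `c`. The other
cubes carry at most `c μ(Q)` of `μ(G)`, so `μ(E) > α μ(Q)`, hence `ν(E) > β ν(Q)`; and
`𝒫ν(G) ≥ c ν(E)`, because `G` takes a fraction at least `c` of the `ν`-mass of each cube of `E`.
-/

open Set

section HeavyPart

variable {α : Type*} [MeasurableSpace α] {μ : Measure α} {F : Set (Set α)} {c : ℝ≥0∞}
  {G Q : Set α}

theorem tsum_measure_inter_eq_measure_sUnion_inter (m : Measure α) (hFc : F.Countable)
    (hFm : ∀ s ∈ F, MeasurableSet s) (hFd : F.PairwiseDisjoint id) (T : Set α) :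
    ∑' s : F, m (s ∩ T) = m (⋃₀ F ∩ T) := by
  rw [← Measure.restrict_apply (.sUnion hFc hFm), measure_sUnion hFc hFd hFm]
  exact tsum_congr fun s => (Measure.restrict_apply (hFm s s.2)).symm

def heavyCubes (μ : Measure α) (F : Set (Set α)) (c : ℝ≥0∞) (G : Set α) : Set (Set α) :=
  {s ∈ F | c * μ s < μ (G ∩ s)}

def heavyPart (μ : Measure α) (F : Set (Set α)) (c : ℝ≥0∞) (G : Set α) : Set α :=
  (G \ ⋃₀ F) ∪ ⋃₀ heavyCubes μ F c G

theorem measurableSet_sUnion_heavyCubes (hFc : F.Countable) (hFm : ∀ s ∈ F, MeasurableSet s) :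
    MeasurableSet (⋃₀ heavyCubes μ F c G) :=
  .sUnion (hFc.mono fun _ h => h.1) fun s hs => hFm s hs.1

theorem measurableSet_heavyPart (hFc : F.Countable) (hFm : ∀ s ∈ F, MeasurableSet s)
    (hG : MeasurableSet G) : MeasurableSet (heavyPart μ F c G) :=
  (hG.diff (.sUnion hFc hFm)).union (measurableSet_sUnion_heavyCubes hFc hFm)

theorem measure_heavyPart (m : Measure α) (hFc : F.Countable) (hFm : ∀ s ∈ F, MeasurableSet s) :
    m (heavyPart μ F c G) = m (G \ ⋃₀ F) + m (⋃₀ heavyCubes μ F c G) :=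
  measure_union (disjoint_sdiff_left.mono_right (sUnion_mono fun _ h => h.1))
    (measurableSet_sUnion_heavyCubes hFc hFm)

theorem heavyPart_subset (hGQ : G ⊆ Q) (hsplit : ∀ s ∈ F, s ⊆ Q ∨ Disjoint s Q) :
    heavyPart μ F c G ⊆ Q := by
  refine union_subset (sdiff_subset.trans hGQ) (sUnion_subset fun s ⟨hsF, hs⟩ => ?_)
  refine (hsplit s hsF).resolve_right fun hsQ => ?_
  rw [(hsQ.symm.mono_left hGQ).inter_eq, measure_empty] at hs
  exact not_lt_zero hs

theorem measure_le_measure_heavyPart_add (hFc : F.Countable) (hFm : ∀ s ∈ F, MeasurableSet s)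
    (hFd : F.PairwiseDisjoint id) (hGQ : G ⊆ Q) (hsplit : ∀ s ∈ F, s ⊆ Q ∨ Disjoint s Q) :
    μ G ≤ μ (heavyPart μ F c G) + c * μ Q := by
  set S := ⋃₀ heavyCubes μ F c G
  have hterm : ∀ s : F, μ (s ∩ G) ≤ μ (s ∩ S) + c * μ (s ∩ Q) := by
    rintro ⟨s, hsF⟩
    by_cases hs : s ∈ heavyCubes μ F c G
    · rw [inter_eq_left.mpr (subset_sUnion_of_mem hs)]
      exact (measure_mono inter_subset_left).trans le_self_add
    · rcases hsplit s hsF with hsQ | hsQ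
      · rw [inter_eq_left.mpr hsQ, inter_comm]
        exact (not_lt.mp fun h => hs ⟨hsF, h⟩).trans le_add_self
      · rw [(hsQ.mono_right hGQ).inter_eq, measure_empty]
        exact zero_le
  calc μ G = μ (G \ ⋃₀ F) + μ (⋃₀ F ∩ G) := by
        rw [inter_comm, add_comm, measure_inter_add_sdiff _ (.sUnion hFc hFm)]
    _ ≤ μ (G \ ⋃₀ F) + (μ (⋃₀ F ∩ S) + c * μ (⋃₀ F ∩ Q)) := by
        gcongr
        simp only [← tsum_measure_inter_eq_measure_sUnion_inter μ hFc hFm hFd,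
          ← ENNReal.tsum_mul_left, ← ENNReal.tsum_add]
        exact ENNReal.tsum_le_tsum hterm
    _ ≤ μ (G \ ⋃₀ F) + (μ S + c * μ Q) := by gcongr <;> exact inter_subset_right
    _ = μ (heavyPart μ F c G) + c * μ Q := by rw [measure_heavyPart μ hFc hFm, add_assoc]

end HeavyPart

section Projection

variable {n : ℕ} {μ ν : Measure (EuclideanSpace ℝ (Fin (n + 1)))}
  {F : Set (Set (EuclideanSpace ℝ (Fin (n + 1))))} {c : ℝ≥0∞}
  {s A B G Q : Set (EuclideanSpace ℝ (Fin (n + 1)))}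

theorem dyadicProjection_eq_of_subset_mem (hFd : F.PairwiseDisjoint id) (hsF : s ∈ F)
    (hA : A ⊆ s) : dyadicProjection μ ν F A = μ A / μ s * ν s := by
  rw [dyadicProjection, sdiff_eq_empty.mpr (hA.trans (subset_sUnion_of_mem hsF)), measure_empty,
    zero_add, tsum_eq_single ⟨s, hsF⟩ fun t ht => ?_, inter_eq_left.mpr hA]
  have hAt : Disjoint A t := (hFd hsF t.2 fun h => ht (Subtype.ext h.symm)).mono_left hA
  rw [hAt.inter_eq, measure_empty, ENNReal.zero_div, zero_mul]

theorem dyadicProjection_div_eq_of_subset_mem (hFd : F.PairwiseDisjoint id) (hsF : s ∈ F)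
    (hA : A ⊆ s) (hB : B ⊆ s) (hμ0 : μ s ≠ 0) (hμ : μ s ≠ ⊤) (hν0 : ν s ≠ 0) (hν : ν s ≠ ⊤) :
    dyadicProjection μ ν F A / dyadicProjection μ ν F B = μ A / μ B := by
  rw [dyadicProjection_eq_of_subset_mem hFd hsF hA, dyadicProjection_eq_of_subset_mem hFd hsF hB,
    ENNReal.mul_div_mul_right _ _ hν0 hν, div_eq_mul_inv (μ A), div_eq_mul_inv (μ B),
    ENNReal.mul_div_mul_right _ _ (ENNReal.inv_ne_zero.mpr hμ) (ENNReal.inv_ne_top.mpr hμ0)]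

theorem dyadicProjection_le_measure (hFc : F.Countable) (hFm : ∀ s ∈ F, MeasurableSet s)
    (hFd : F.PairwiseDisjoint id) (hsplit : ∀ s ∈ F, s ⊆ Q ∨ Disjoint s Q) :
    dyadicProjection μ ν F Q ≤ ν Q := by
  have hterm : ∀ s : F, μ (Q ∩ s) / μ s * ν s ≤ ν (s ∩ Q) := by
    rintro ⟨s, hsF⟩
    rcases hsplit s hsF with hsQ | hsQ
    · rw [inter_eq_right.mpr hsQ, inter_eq_left.mpr hsQ]
      exact mul_le_of_le_one_left' ENNReal.div_self_le_one
    · rw [hsQ.symm.inter_eq, measure_empty, ENNReal.zero_div, zero_mul]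
      exact zero_le
  calc dyadicProjection μ ν F Q ≤ ν (Q \ ⋃₀ F) + ∑' s : F, ν (s ∩ Q) :=
        add_le_add_right (ENNReal.tsum_le_tsum hterm) _
    _ = ν Q := by
        rw [tsum_measure_inter_eq_measure_sUnion_inter ν hFc hFm hFd, inter_comm, add_comm,
          measure_inter_add_sdiff _ (.sUnion hFc hFm)]

theorem mul_measure_heavyPart_le_dyadicProjection (hFc : F.Countable)
    (hFm : ∀ s ∈ F, MeasurableSet s) (hFd : F.PairwiseDisjoint id) (hμF : ∀ s ∈ F, μ s ≠ ⊤)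
    (hc : c ≤ 1) : c * ν (heavyPart μ F c G) ≤ dyadicProjection μ ν F G := by
  set S := ⋃₀ heavyCubes μ F c G
  have hterm : ∀ s : F, c * ν (s ∩ S) ≤ μ (G ∩ s) / μ s * ν s := by
    rintro ⟨s, hsF⟩
    by_cases hs : s ∈ heavyCubes μ F c G
    · rw [inter_eq_left.mpr (subset_sUnion_of_mem hs)]
      have hμs : μ s ≠ 0 := fun h => by
        simpa [h, measure_mono_null inter_subset_right h] using hs.2
      gcongr
      exact (ENNReal.le_div_iff_mul_le (.inl hμs) (.inl (hμF s hsF))).mpr hs.2.le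
    · have hsS : Disjoint s S :=
        disjoint_sUnion_right.mpr fun t ht => hFd hsF ht.1 fun hst => hs (hst ▸ ht)
      rw [hsS.inter_eq, measure_empty, mul_zero]
      exact zero_le
  calc c * ν (heavyPart μ F c G) = c * ν (G \ ⋃₀ F) + c * ν (⋃₀ F ∩ S) := by
        rw [measure_heavyPart ν hFc hFm, mul_add, inter_eq_right.mpr (sUnion_mono fun _ h => h.1)]
    _ ≤ ν (G \ ⋃₀ F) + ∑' s : F, μ (G ∩ s) / μ s * ν s := by
        gcongr
        · exact mul_le_of_le_one_left' hc
        · rw [← tsum_measure_inter_eq_measure_sUnion_inter ν hFc hFm hFd,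
            ← ENNReal.tsum_mul_left]
          exact ENNReal.tsum_le_tsum hterm
    _ = dyadicProjection μ ν F G := rfl

theorem mul_lt_dyadicProjection_div (hFc : F.Countable) (hFm : ∀ s ∈ F, MeasurableSet s)
    (hFd : F.PairwiseDisjoint id) (hμF : ∀ s ∈ F, μ s ≠ ⊤) (hμQ0 : μ Q ≠ 0) (hμQ : μ Q ≠ ⊤)
    (hsplit : ∀ s ∈ F, s ⊆ Q ∨ Disjoint s Q) {a b : ℝ≥0∞} (hc0 : c ≠ 0) (hc1 : c ≤ 1)
    (hA : ∀ E ⊆ Q, MeasurableSet E → a < μ E / μ Q → b < ν E / ν Q)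
    (hGQ : G ⊆ Q) (hG : MeasurableSet G) (hμG : a + c < μ G / μ Q) :
    c * b < dyadicProjection μ ν F G / dyadicProjection μ ν F Q := by
  have hc : c ≠ ⊤ := ne_top_of_le_ne_top ENNReal.one_ne_top hc1
  have hE : a < μ (heavyPart μ F c G) / μ Q := by
    rw [← ENNReal.add_lt_add_iff_right hc]
    calc a + c < μ G / μ Q := hμG
      _ ≤ (μ (heavyPart μ F c G) + c * μ Q) / μ Q := by
          gcongr
          exact measure_le_measure_heavyPart_add hFc hFm hFd hGQ hsplit
      _ = μ (heavyPart μ F c G) / μ Q + c := by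
          rw [ENNReal.add_div, ENNReal.mul_div_cancel_right hμQ0 hμQ]
  calc c * b < c * (ν (heavyPart μ F c G) / ν Q) :=
        ENNReal.mul_lt_mul_right hc0 hc (hA _ (heavyPart_subset hGQ hsplit)
          (measurableSet_heavyPart hFc hFm hG) hE)
    _ = c * ν (heavyPart μ F c G) / ν Q := (mul_div_assoc _ _ _).symm
    _ ≤ dyadicProjection μ ν F G / ν Q := by
        gcongr
        exact mul_measure_heavyPart_le_dyadicProjection hFc hFm hFd hμF hc1
    _ ≤ dyadicProjection μ ν F G / dyadicProjection μ ν F Q :=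
        ENNReal.div_le_div_left (dyadicProjection_le_measure hFc hFm hFd hsplit) _

end Projection

section Grid

variable {n : ℕ} {E : Set (EuclideanSpace ℝ (Fin (n + 1)))} {D : DyadicGrid E}
  {Q Q' : Set (EuclideanSpace ℝ (Fin (n + 1)))}

theorem IsLocalizedFamily.subset_iUnion_cubes {Q0 : Set (EuclideanSpace ℝ (Fin (n + 1)))}
    {DQ0 : Set (Set (EuclideanSpace ℝ (Fin (n + 1))))} (hQ0 : IsLocalizedFamily D Q0 DQ0) :
    DQ0 ⊆ ⋃ k, D.cubes k := by
  rcases hQ0 with ⟨-, rfl⟩ | ⟨k0, -, rfl⟩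
  · exact subset_rfl
  · rintro Q ⟨k, -, hk, -⟩
    exact mem_iUnion.mpr ⟨k, hk⟩

theorem DyadicGrid.measurableSet_of_mem (hQ : Q ∈ ⋃ k, D.cubes k) : MeasurableSet Q := by
  obtain ⟨k, hk⟩ := mem_iUnion.mp hQ
  exact D.borel k Q hk

theorem DyadicGrid.subset_or_subset_or_disjoint (hQ : Q ∈ ⋃ k, D.cubes k)
    (hQ' : Q' ∈ ⋃ k, D.cubes k) : Q ⊆ Q' ∨ Q' ⊆ Q ∨ Disjoint Q Q' := by
  obtain ⟨k, hk⟩ := mem_iUnion.mp hQ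
  obtain ⟨j, hj⟩ := mem_iUnion.mp hQ'
  rcases le_total j k with h | h
  · rcases D.nested h Q hk Q' hj with h | h
    · exact .inl h
    · exact .inr (.inr (disjoint_iff_inter_eq_empty.mpr h))
  · rcases D.nested h Q' hj Q hk with h | h
    · exact .inr (.inl h)
    · exact .inr (.inr (disjoint_iff_inter_eq_empty.mpr h).symm)

end Grid

theorem projection_Ainfty_dyadic_general {n : ℕ}
    (E : Set (EuclideanSpace ℝ (Fin (n + 1)))) (D : DyadicGrid E)
    (Q0 : Set (EuclideanSpace ℝ (Fin (n + 1))))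
    (DQ0 : Set (Set (EuclideanSpace ℝ (Fin (n + 1)))))
    (hQ0 : IsLocalizedFamily D Q0 DQ0)
    (μ ν : Measure (EuclideanSpace ℝ (Fin (n + 1))))
    (hμfin : ∀ Q ∈ DQ0, 0 < μ Q ∧ μ Q < ⊤)
    (hνfin : ∀ Q ∈ DQ0, 0 < ν Q ∧ ν Q < ⊤)
    (F : Set (Set (EuclideanSpace ℝ (Fin (n + 1)))))
    (hF : F ⊆ DQ0) (hFdisj : F.PairwiseDisjoint id)
    (hν : AInftyDyadic DQ0 μ (fun A => ν A)) :
    AInftyDyadic DQ0 μ (dyadicProjection μ ν F) := by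
  obtain ⟨α, β, hα0, hα1, hβ0, hβ1, hA⟩ := hν
  have hgrid := hQ0.subset_iUnion_cubes
  have hFc : F.Countable := D.countable.mono (hF.trans hgrid)
  have hFm : ∀ s ∈ F, MeasurableSet s := fun s hs => D.measurableSet_of_mem (hgrid (hF hs))
  have hc0 : 0 < (1 - α) / 2 := by linarith
  have hcβ : (1 - α) / 2 * β < α + (1 - α) / 2 := by nlinarith
  refine ⟨α + (1 - α) / 2, (1 - α) / 2 * β, by linarith, by linarith, by positivity,
    by nlinarith, fun Q hQ G hGQ hG hμG => ?_⟩
  by_cases hcase : ∃ s ∈ F, Q ⊆ s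
  · obtain ⟨s, hsF, hQs⟩ := hcase
    obtain ⟨hμ0, hμ⟩ := hμfin s (hF hsF)
    obtain ⟨hν0, hν⟩ := hνfin s (hF hsF)
    rw [dyadicProjection_div_eq_of_subset_mem hFdisj hsF (hGQ.trans hQs) hQs hμ0.ne' hμ.ne
      hν0.ne' hν.ne]
    exact ((ENNReal.ofReal_lt_ofReal_iff (by linarith)).mpr hcβ).trans hμG
  · push Not at hcase
    have hsplit : ∀ s ∈ F, s ⊆ Q ∨ Disjoint s Q := fun s hs =>
      (D.subset_or_subset_or_disjoint (hgrid (hF hs)) (hgrid hQ)).imp_right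
        fun h => h.resolve_left (hcase s hs)
    rw [ENNReal.ofReal_add hα0.le hc0.le] at hμG
    rw [ENNReal.ofReal_mul hc0.le]
    exact mul_lt_dyadicProjection_div hFc hFm hFdisj (fun s hs => (hμfin s (hF hs)).2.ne)
      (hμfin Q hQ).1.ne' (hμfin Q hQ).2.ne hsplit (ENNReal.ofReal_pos.mpr hc0).ne'
      (ENNReal.ofReal_le_one.mpr (by linarith)) (hA Q hQ) hGQ hG hμG

/-- **The projection of an `A∞^{dyadic}` measure is `A∞^{dyadic}`**
(Lemma `lemm_w-Pw-:properties` (b) of the paper). -/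
theorem projection_Ainfty_dyadic {n : ℕ}
    (E : Set (EuclideanSpace ℝ (Fin (n + 1)))) (D : DyadicGrid E)
    (Q0 : Set (EuclideanSpace ℝ (Fin (n + 1))))
    (DQ0 : Set (Set (EuclideanSpace ℝ (Fin (n + 1)))))
    (hQ0 : IsLocalizedFamily D Q0 DQ0)
    (μ ν : Measure (EuclideanSpace ℝ (Fin (n + 1))))
    (hμfin : ∀ Q ∈ DQ0, 0 < μ Q ∧ μ Q < ⊤)
    (hνfin : ∀ Q ∈ DQ0, 0 < ν Q ∧ ν Q < ⊤)
    (hμd : DyadicallyDoubling D DQ0 (fun A => μ A))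
    (F : Set (Set (EuclideanSpace ℝ (Fin (n + 1)))))
    (hF : F ⊆ DQ0) (hFdisj : F.PairwiseDisjoint id)
    (hν : AInftyDyadic DQ0 μ (fun A => ν A)) :
    AInftyDyadic DQ0 μ (dyadicProjection μ ν F) :=
  projection_Ainfty_dyadic_general E D Q0 DQ0 hQ0 μ ν hμfin hνfin F hF hFdisj hν
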